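/- arXiv:1502.02481 — 4 statements merged into one kernel-verified Lean document; each statement's English description precedes it below -/
import Mathlib

section
/- For any subtree T(x) of a DFS tree T of an undirected graph G, T(x) is a DFS tree (rooted at x) of the subgraph of G induced by the vertex set of T(x). -/
/-- `u` is an ancestor of `v` with respect to the parent function `par`
(every vertex is an ancestor of itself). -/
def IsAncestor {V : Type*} (par : V → V) (u v : V) : Prop := ∃ n : ℕ, par^[n] v = u

/-- A spanning tree of `G` rooted at `r`, given by a parent function:
the root is its own parent, every vertex reaches the root by iterating
the parent function, and each non-root vertex is adjacent to its parent. -/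
structure RootedSpanningTree {V : Type*} (G : SimpleGraph V) (r : V) where
  par : V → V
  par_root : par r = r
  reaches_root : ∀ v, ∃ n : ℕ, par^[n] v = r
  adj_par : ∀ v, v ≠ r → G.Adj (par v) v

/-- Every edge of `G` joins two vertices in ancestor-descendant relation
in the tree, i.e. there are no cross edges (all non-tree edges are back edges). -/
def RootedSpanningTree.noCrossEdges {V : Type*} {G : SimpleGraph V} {r : V}
    (T : RootedSpanningTree G r) : Prop :=
  ∀ u v, G.Adj u v → IsAncestor T.par u v ∨ IsAncestor T.par v u

/-- `v` lies on the ancestor-descendant tree path from `x` down to `y`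
(where `x` is an ancestor of `y`). -/
def OnTreePath {V : Type*} (par : V → V) (x y v : V) : Prop :=
  IsAncestor par x v ∧ IsAncestor par v y

lemma anc_antisymm {V : Type*} {G : SimpleGraph V} {r : V} (T : RootedSpanningTree G r)
    {u v : V} (h1 : IsAncestor T.par u v) (h2 : IsAncestor T.par v u) : u = v := by
  obtain ⟨a, ha⟩ := h1
  obtain ⟨b, hb⟩ := h2
  rcases Nat.eq_zero_or_pos b with hb0 | hbpos
  · subst hb0; simpa using hb
  have hcyc : T.par^[a + b] u = u := by
    rw [Function.iterate_add_apply, hb, ha]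
  have hper : ∀ k : ℕ, T.par^[k * (a + b)] u = u := by
    intro k
    induction k with
    | zero => simp
    | succ k ih => rw [Nat.succ_mul, Function.iterate_add_apply, hcyc, ih]
  obtain ⟨m, hm⟩ := T.reaches_root u
  have hab : 0 < a + b := by omega
  have hk : m ≤ (m + 1) * (a + b) := by nlinarith
  have hur : u = r := by
    have := hper (m + 1)
    rw [show (m + 1) * (a + b) = ((m + 1) * (a + b) - m) + m by omega,
      Function.iterate_add_apply, hm, Function.iterate_fixed T.par_root] at this
    exact this.symm
  subst hur
  rw [Function.iterate_fixed T.par_root] at hb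
  exact hb

/-- For any vertex `x` of a DFS tree `T` of `G`, the subtree `T(x)` is a DFS
tree rooted at `x` of the subgraph of `G` induced by the vertices of `T(x)`:
there is a rooted spanning tree of the induced subgraph, rooted at `x`, whose
parent function agrees with that of `T` and which has no cross edges. -/
theorem subtree_is_dfsTree_of_induced {V : Type*} (G : SimpleGraph V) (r : V)
    (T : RootedSpanningTree G r) (hT : T.noCrossEdges) (x : V) :
    ∃ T' : RootedSpanningTree (G.induce {u : V | IsAncestor T.par x u})
        ⟨x, ⟨0, rfl⟩⟩,
      T'.noCrossEdges ∧
      ∀ u : {u : V | IsAncestor T.par x u},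
        (u : V) ≠ x → ((T'.par u : V) = T.par (u : V)) := by
  classical
  set S : Set V := {u : V | IsAncestor T.par x u} with hS
  have hpar_mem : ∀ v : V, v ∈ S → v ≠ x → T.par v ∈ S := by
    rintro v ⟨n, hn⟩ hvx
    rcases n with _ | n
    · exact absurd (by simpa using hn) hvx
    · exact ⟨n, by rwa [Function.iterate_succ_apply] at hn⟩
  let par' : S → S := fun v => if h : (v : V) = x then ⟨x, ⟨0, rfl⟩⟩
    else ⟨T.par v, hpar_mem v v.2 h⟩
  -- key lemma: par' iterates agree with T.par iterates as long as the target stays in S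
  have key : ∀ (n : ℕ) (v : S) (hu : T.par^[n] (v : V) ∈ S),
      par'^[n] v = ⟨T.par^[n] (v : V), hu⟩ := by
    intro n
    induction n with
    | zero => intro v _; simp
    | succ n ih =>
      intro v hu
      by_cases hvx : (v : V) = x
      · -- stays at x
        have hux : T.par^[n + 1] (v : V) = x := by
          refine anc_antisymm T ⟨n + 1, by rw [hvx]⟩ hu
        have hfix : par' v = v := by
          simp only [par', dif_pos hvx]
          exact Subtype.ext hvx.symm
        rw [Function.iterate_fixed hfix]
        exact Subtype.ext (hvx.trans hux.symm)
      · have hpv : T.par (v : V) ∈ S := hpar_mem v v.2 hvx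
        rw [Function.iterate_succ_apply]
        have hstep : par' v = ⟨T.par (v : V), hpv⟩ := by
          simp only [par', dif_neg hvx]
        rw [hstep, ih ⟨T.par (v : V), hpv⟩ (by rwa [← Function.iterate_succ_apply])]
        simp [Function.iterate_succ_apply]
  have hne_r : ∀ v : S, (v : V) ≠ x → (v : V) ≠ r := by
    intro v hvx hvr
    obtain ⟨n, hn⟩ := v.2
    rw [hvr, Function.iterate_fixed T.par_root] at hn
    exact hvx (hvr.trans hn)
  have hanc : ∀ u v : S, IsAncestor T.par (u : V) (v : V) →
      IsAncestor par' u v := by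
    rintro u v ⟨n, hn⟩
    exact ⟨n, by rw [key n v (hn ▸ u.2)]; exact Subtype.ext hn⟩
  refine ⟨⟨par', ?_, ?_, ?_⟩, ?_, ?_⟩
  · simp only [par', dif_pos]
  · intro v
    obtain ⟨n, hn⟩ := v.2
    exact ⟨n, by rw [key n v (by rw [hn]; exact ⟨0, rfl⟩)]; exact Subtype.ext hn⟩
  · intro v hvx
    have hvx' : (v : V) ≠ x := fun h => hvx (Subtype.ext h)
    simp only [par', dif_neg hvx']
    exact T.adj_par (v : V) (hne_r v hvx')
  · intro u v huv
    have : G.Adj (u : V) (v : V) := huv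
    rcases hT (u : V) (v : V) this with h | h
    · exact Or.inl (hanc u v h)
    · exact Or.inr (hanc v u h)
  · intro u hux
    simp only [par', dif_neg hux]
end

section
/- Disjoint tree partitioning: Given a DFS tree T of an undirected graph G on n vertices rooted at a dummy root r connected to all vertices, and a set U of k failed vertices and failed tree edges, there exists a partition of the vertex set V \ ({r} ∪ V_f) into a collection P of ancestor-descendant paths of T and a collection 𝒯 of subtrees of T such that: (i) no path in P and no tree in 𝒯 contains a failed vertex or failed edge, (ii) |P| ≤ k, and (iii) no edge of G joins two distinct trees of 𝒯. -/
/-!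
Call `d` a candidate of a vertex `v` if `d` is the parent of a failed vertex or of the lower
endpoint of a failed edge, and the tree path from `v` down to `d` avoids the root and all failures.
Fix a linear order on `V` and send every vertex that has candidates to its least candidate. The
vertices sent to `d` form a tree path ending at `d`: a vertex between two of them has fewer
candidates but still `d`, so `d` is still least. There are at most `|Vf| + |Ef|` such `d`.
A vertex outside `{r} ∪ Vf` without candidates has no failure anywhere below it, so the remaining
vertices are covered by the subtrees below the maximal such vertices. These subtrees are
failure-free, their roots are pairwise incomparable, and since every edge joins an ancestor to a
descendant, no edge joins two of them.
-/

open Function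

namespace IsAncestor

variable {V : Type*} {par : V → V} {u v w : V}

protected theorem refl (par : V → V) (v : V) : IsAncestor par v v := ⟨0, rfl⟩

protected theorem trans (huv : IsAncestor par u v) (hvw : IsAncestor par v w) :
    IsAncestor par u w := by
  obtain ⟨n, rfl⟩ := huv
  obtain ⟨m, rfl⟩ := hvw
  exact ⟨n + m, iterate_add_apply par n m w⟩

theorem of_par (h : IsAncestor par u (par v)) : IsAncestor par u v := by
  obtain ⟨n, rfl⟩ := h
  exact ⟨n + 1, rfl⟩

theorem par_right_of_ne (h : IsAncestor par u v) (hne : u ≠ v) : IsAncestor par u (par v) := by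
  obtain ⟨_ | n, rfl⟩ := h
  · exact absurd rfl hne
  · exact ⟨n, rfl⟩

theorem total (hu : IsAncestor par u w) (hv : IsAncestor par v w) :
    IsAncestor par u v ∨ IsAncestor par v u := by
  obtain ⟨n, rfl⟩ := hu
  obtain ⟨m, rfl⟩ := hv
  rcases le_total n m with h | h
  · exact Or.inr ⟨m - n, by rw [← iterate_add_apply, Nat.sub_add_cancel h]⟩
  · exact Or.inl ⟨n - m, by rw [← iterate_add_apply, Nat.sub_add_cancel h]⟩

end IsAncestor

structure IsRootedTree {V : Type*} (par : V → V) (r : V) : Prop where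
  par_root : par r = r
  reaches_root : ∀ v, ∃ n : ℕ, par^[n] v = r

theorem RootedSpanningTree.isRootedTree {V : Type*} {G : SimpleGraph V} {r : V}
    (T : RootedSpanningTree G r) : IsRootedTree T.par r :=
  ⟨T.par_root, T.reaches_root⟩

noncomputable def depth {V : Type*} (par : V → V) (v : V) : ℕ := {u | IsAncestor par u v}.ncard

namespace IsRootedTree

variable {V : Type*} {par : V → V} {r u v w x : V} (ht : IsRootedTree par r)
include ht

theorem eq_root_of_isPeriodicPt {n : ℕ} (h : IsPeriodicPt par n u) (hn : 0 < n) : u = r := by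
  obtain ⟨N, hN⟩ := ht.reaches_root u
  calc u = par^[n * N] u := (h.mul_const N).eq.symm
    _ = par^[n * N - N] (par^[N] u) := by
      rw [← iterate_add_apply, Nat.sub_add_cancel (Nat.le_mul_of_pos_left N hn)]
    _ = r := by rw [hN, iterate_fixed ht.par_root]

theorem isAncestor_antisymm (huv : IsAncestor par u v) (hvu : IsAncestor par v u) : u = v := by
  obtain ⟨_ | n, rfl⟩ := huv
  · rfl
  obtain ⟨m, hm⟩ := hvu
  have hper : IsPeriodicPt par (n + 1 + m) (par^[n + 1] v) := by
    rw [IsPeriodicPt, IsFixedPt, iterate_add_apply, hm]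
  have hu := ht.eq_root_of_isPeriodicPt hper (by omega)
  rw [hu, ← hm, hu, iterate_fixed ht.par_root]

theorem eq_or_eq_par_of_onTreePath (h : OnTreePath par (par v) v x) : x = v ∨ x = par v := by
  obtain ⟨hpx, _ | n, hn⟩ := h
  · exact Or.inl hn.symm
  · exact Or.inr (ht.isAncestor_antisymm ⟨n, hn⟩ hpx)

theorem depth_lt_depth [Finite V] (huv : IsAncestor par u v) (hne : u ≠ v) :
    depth par u < depth par v :=
  Set.ncard_lt_ncard ⟨fun _ hx => IsAncestor.trans hx huv,
    fun hsub => hne (ht.isAncestor_antisymm huv (hsub (IsAncestor.refl par v)))⟩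

theorem isAncestor_of_depth_le [Finite V] (hu : IsAncestor par u w) (hv : IsAncestor par v w)
    (h : depth par u ≤ depth par v) : IsAncestor par u v := by
  rcases hu.total hv with huv | hvu
  · exact huv
  · by_cases hne : v = u
    · exact hne ▸ IsAncestor.refl par v
    · exact absurd h (not_le.mpr (ht.depth_lt_depth hvu hne))

end IsRootedTree

namespace TreePartition

variable {V : Type*}

/-- The edges of the path are the `(par x, x)` with `x ≠ u`. -/
def CleanPath (par : V → V) (r : V) (Vf Ef : Finset V) (u v : V) : Prop :=
  IsAncestor par u v ∧ ∀ x, OnTreePath par u v x → x ≠ r ∧ x ∉ Vf ∧ (x ≠ u → x ∉ Ef)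

section CleanPath

variable {par : V → V} {r : V} {Vf Ef : Finset V} {u v w : V}

theorem CleanPath.isAncestor (h : CleanPath par r Vf Ef u v) : IsAncestor par u v := h.1

theorem CleanPath.top (h : CleanPath par r Vf Ef u v) : u ≠ r ∧ u ∉ Vf :=
  let hu := h.2 u ⟨IsAncestor.refl par u, h.1⟩
  ⟨hu.1, hu.2.1⟩

theorem CleanPath.bottom (h : CleanPath par r Vf Ef u v) : v ≠ r ∧ v ∉ Vf ∧ (v ≠ u → v ∉ Ef) :=
  h.2 v ⟨h.1, IsAncestor.refl par v⟩

theorem CleanPath.trans (huv : CleanPath par r Vf Ef u v) (hvw : CleanPath par r Vf Ef v w) :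
    CleanPath par r Vf Ef u w := by
  refine ⟨huv.1.trans hvw.1, fun x ⟨hux, hxw⟩ => ?_⟩
  rcases hxw.total hvw.1 with hxv | hvx
  · exact huv.2 x ⟨hux, hxv⟩
  · obtain ⟨hxr, hxf, hxe⟩ := hvw.2 x ⟨hvx, hxw⟩
    refine ⟨hxr, hxf, fun hxu => ?_⟩
    by_cases hxv : x = v
    · subst hxv
      exact huv.bottom.2.2 hxu
    · exact hxe hxv

theorem CleanPath.upper (h : CleanPath par r Vf Ef u w) (huv : IsAncestor par u v)
    (hvw : IsAncestor par v w) : CleanPath par r Vf Ef u v :=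
  ⟨huv, fun x ⟨hux, hxv⟩ => h.2 x ⟨hux, hxv.trans hvw⟩⟩

theorem CleanPath.lower (ht : IsRootedTree par r) (h : CleanPath par r Vf Ef u w)
    (huv : IsAncestor par u v) (hvw : IsAncestor par v w) : CleanPath par r Vf Ef v w := by
  refine ⟨hvw, fun x ⟨hvx, hxw⟩ => ?_⟩
  obtain ⟨hxr, hxf, hxe⟩ := h.2 x ⟨huv.trans hvx, hxw⟩
  refine ⟨hxr, hxf, fun hxv hxe' => hxe ?_ hxe'⟩
  rintro rfl
  exact hxv (ht.isAncestor_antisymm huv hvx)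

theorem cleanPath_self (ht : IsRootedTree par r) (hr : v ≠ r) (hf : v ∉ Vf) :
    CleanPath par r Vf Ef v v := by
  refine ⟨IsAncestor.refl par v, fun x ⟨hvx, hxv⟩ => ?_⟩
  obtain rfl := ht.isAncestor_antisymm hxv hvx
  exact ⟨hr, hf, fun h => absurd rfl h⟩

theorem cleanPath_par (ht : IsRootedTree par r) (hr : v ≠ r) (hf : v ∉ Vf) (he : v ∉ Ef)
    (hpr : par v ≠ r) (hpf : par v ∉ Vf) : CleanPath par r Vf Ef (par v) v := by
  refine ⟨⟨1, rfl⟩, fun x hx => ?_⟩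
  rcases ht.eq_or_eq_par_of_onTreePath hx with rfl | rfl
  · exact ⟨hr, hf, fun _ => he⟩
  · exact ⟨hpr, hpf, fun h => absurd rfl h⟩

end CleanPath

open Classical in
noncomputable def failureParents (par : V → V) (Vf Ef : Finset V) : Finset V :=
  (Vf ∪ Ef).image par

open Classical in
noncomputable def candidates (par : V → V) (r : V) (Vf Ef : Finset V) (v : V) : Finset V :=
  (failureParents par Vf Ef).filter (CleanPath par r Vf Ef v)

section Candidates

variable {par : V → V} {r : V} {Vf Ef : Finset V} {u v d : V}

theorem card_failureParents_le : (failureParents par Vf Ef).card ≤ Vf.card + Ef.card := by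
  classical
  exact Finset.card_image_le.trans (Finset.card_union_le Vf Ef)

theorem mem_candidates :
    d ∈ candidates par r Vf Ef v ↔ d ∈ failureParents par Vf Ef ∧ CleanPath par r Vf Ef v d := by
  classical
  simp [candidates]

theorem candidates_subset (h : CleanPath par r Vf Ef u v) :
    candidates par r Vf Ef v ⊆ candidates par r Vf Ef u := fun _ hd =>
  mem_candidates.mpr ⟨(mem_candidates.mp hd).1, h.trans (mem_candidates.mp hd).2⟩

theorem par_mem_candidates (h : CleanPath par r Vf Ef u (par v)) (hv : v ∈ Vf ∨ v ∈ Ef) :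
    par v ∈ candidates par r Vf Ef u := by
  classical
  refine mem_candidates.mpr ⟨Finset.mem_image_of_mem par ?_, h⟩
  exact Finset.mem_union.mpr hv

theorem cleanPath_of_candidates_eq_empty (ht : IsRootedTree par r) (hr : u ≠ r) (hf : u ∉ Vf)
    (hc : candidates par r Vf Ef u = ∅) (h : IsAncestor par u v) : CleanPath par r Vf Ef u v := by
  obtain ⟨n, hn⟩ := h
  induction n generalizing v with
  | zero =>
    obtain rfl : v = u := hn
    exact cleanPath_self ht hr hf
  | succ n ih =>
    have hup : CleanPath par r Vf Ef u (par v) := ih hn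
    have hvr : v ≠ r := by
      rintro rfl
      exact hup.bottom.1 ht.par_root
    have hfail : v ∉ Vf ∧ v ∉ Ef := by
      rw [← not_or]
      intro hv
      simpa [hc] using par_mem_candidates hup hv
    exact hup.trans (cleanPath_par ht hvr hfail.1 hfail.2 hup.bottom.1 hup.bottom.2.1)

end Candidates

def fiber [LinearOrder V] (par : V → V) (r : V) (Vf Ef : Finset V) (d : V) : Set V :=
  {v | IsLeast (candidates par r Vf Ef v : Set V) d}

open Classical in
noncomputable def pathTop [LinearOrder V] (par : V → V) (r : V) (Vf Ef : Finset V) (d : V) : V :=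
  if h : d ∈ fiber par r Vf Ef d then argminOn (depth par) (fiber par r Vf Ef d) ⟨d, h⟩ else d

open Classical in
noncomputable def paths [LinearOrder V] (par : V → V) (r : V) (Vf Ef : Finset V) :
    Finset (V × V) :=
  ((failureParents par Vf Ef).filter (fun d => d ∈ fiber par r Vf Ef d)).image
    fun d => (pathTop par r Vf Ef d, d)

section Fiber

variable [LinearOrder V] {par : V → V} {r : V} {Vf Ef : Finset V} {u v x d d' : V}

theorem cleanPath_of_mem_fiber (h : v ∈ fiber par r Vf Ef d) : CleanPath par r Vf Ef v d :=
  (mem_candidates.mp h.1).2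

theorem eq_of_mem_fiber (h : v ∈ fiber par r Vf Ef d) (h' : v ∈ fiber par r Vf Ef d') : d = d' :=
  h.unique h'

theorem mem_fiber_min' (h : (candidates par r Vf Ef v).Nonempty) :
    v ∈ fiber par r Vf Ef ((candidates par r Vf Ef v).min' h) :=
  Finset.isLeast_min' _ h

theorem mem_fiber_of_cleanPath (hx : x ∈ fiber par r Vf Ef d) (hxv : CleanPath par r Vf Ef x v)
    (hvd : CleanPath par r Vf Ef v d) : v ∈ fiber par r Vf Ef d :=
  ⟨mem_candidates.mpr ⟨(mem_candidates.mp hx.1).1, hvd⟩,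
    fun _ hd' => hx.2 (candidates_subset hxv hd')⟩

theorem mem_fiber_self_of_mem (ht : IsRootedTree par r) (h : v ∈ fiber par r Vf Ef d) :
    d ∈ fiber par r Vf Ef d := by
  have hvd := cleanPath_of_mem_fiber h
  exact mem_fiber_of_cleanPath h hvd (cleanPath_self ht hvd.bottom.1 hvd.bottom.2.1)

theorem pathTop_mem (hd : d ∈ fiber par r Vf Ef d) :
    pathTop par r Vf Ef d ∈ fiber par r Vf Ef d := by
  classical
  rw [pathTop, dif_pos hd]
  exact argminOn_mem _ _ _

theorem isAncestor_pathTop [Finite V] (ht : IsRootedTree par r) (hv : v ∈ fiber par r Vf Ef d) :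
    IsAncestor par (pathTop par r Vf Ef d) v := by
  have hd := mem_fiber_self_of_mem ht hv
  have htop := pathTop_mem hd
  refine ht.isAncestor_of_depth_le (cleanPath_of_mem_fiber htop).isAncestor
    (cleanPath_of_mem_fiber hv).isAncestor (not_lt.mp ?_)
  classical
  rw [pathTop, dif_pos hd]
  exact not_lt_argminOn _ _ hv

theorem cleanPath_pathTop (hd : d ∈ fiber par r Vf Ef d) :
    CleanPath par r Vf Ef (pathTop par r Vf Ef d) d :=
  cleanPath_of_mem_fiber (pathTop_mem hd)

theorem mem_fiber_iff_onTreePath [Finite V] (ht : IsRootedTree par r)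
    (hd : d ∈ fiber par r Vf Ef d) :
    v ∈ fiber par r Vf Ef d ↔ OnTreePath par (pathTop par r Vf Ef d) d v := by
  refine ⟨fun hv => ⟨isAncestor_pathTop ht hv, (cleanPath_of_mem_fiber hv).isAncestor⟩,
    fun ⟨htv, hvd⟩ => ?_⟩
  have htd := cleanPath_pathTop hd
  exact mem_fiber_of_cleanPath (pathTop_mem hd) (htd.upper htv hvd) (htd.lower ht htv hvd)

theorem mem_paths :
    (u, v) ∈ paths par r Vf Ef ↔ v ∈ fiber par r Vf Ef v ∧ u = pathTop par r Vf Ef v := by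
  classical
  simp only [paths, Finset.mem_image, Finset.mem_filter, Prod.mk.injEq]
  constructor
  · rintro ⟨d, ⟨-, hd⟩, rfl, rfl⟩
    exact ⟨hd, rfl⟩
  · rintro ⟨hv, rfl⟩
    exact ⟨v, ⟨(mem_candidates.mp hv.1).1, hv⟩, rfl, rfl⟩

theorem cleanPath_of_mem_paths {p : V × V} (hp : p ∈ paths par r Vf Ef) :
    CleanPath par r Vf Ef p.1 p.2 := by
  obtain ⟨a, d⟩ := p
  obtain ⟨hd, rfl⟩ := mem_paths.mp hp
  exact cleanPath_pathTop hd

theorem card_paths_le : (paths par r Vf Ef).card ≤ Vf.card + Ef.card := by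
  classical
  exact Finset.card_image_le.trans
    ((Finset.card_filter_le _ _).trans card_failureParents_le)

theorem mem_fiber_of_mem_paths [Finite V] (ht : IsRootedTree par r) {p : V × V}
    (hp : p ∈ paths par r Vf Ef) (hv : OnTreePath par p.1 p.2 v) : v ∈ fiber par r Vf Ef p.2 := by
  obtain ⟨a, d⟩ := p
  obtain ⟨hd, rfl⟩ := mem_paths.mp hp
  exact (mem_fiber_iff_onTreePath ht hd).mpr hv

theorem eq_of_mem_paths_of_onTreePath [Finite V] (ht : IsRootedTree par r) {p q : V × V}
    (hp : p ∈ paths par r Vf Ef) (hq : q ∈ paths par r Vf Ef) (hvp : OnTreePath par p.1 p.2 v)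
    (hvq : OnTreePath par q.1 q.2 v) : p = q := by
  obtain ⟨a, d⟩ := p
  obtain ⟨b, d'⟩ := q
  obtain ⟨-, rfl⟩ := mem_paths.mp hp
  obtain ⟨-, rfl⟩ := mem_paths.mp hq
  obtain rfl := eq_of_mem_fiber (mem_fiber_of_mem_paths ht hp hvp) (mem_fiber_of_mem_paths ht hq hvq)
  rfl

end Fiber

def IsTreeRoot (par : V → V) (r : V) (Vf Ef : Finset V) (w : V) : Prop :=
  w ≠ r ∧ w ∉ Vf ∧ candidates par r Vf Ef w = ∅ ∧
    ¬(CleanPath par r Vf Ef (par w) w ∧ candidates par r Vf Ef (par w) = ∅)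

open Classical in
noncomputable def treeRoots [Fintype V] (par : V → V) (r : V) (Vf Ef : Finset V) : Finset V :=
  Finset.univ.filter (IsTreeRoot par r Vf Ef)

section TreeRoot

variable {par : V → V} {r : V} {Vf Ef : Finset V} {u v ρ₁ ρ₂ : V}

theorem mem_treeRoots [Fintype V] : ρ₁ ∈ treeRoots par r Vf Ef ↔ IsTreeRoot par r Vf Ef ρ₁ := by
  classical
  simp [treeRoots]

theorem IsTreeRoot.cleanPath (ht : IsRootedTree par r) (hρ : IsTreeRoot par r Vf Ef ρ₁)
    (h : IsAncestor par ρ₁ v) : CleanPath par r Vf Ef ρ₁ v :=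
  cleanPath_of_candidates_eq_empty ht hρ.1 hρ.2.1 hρ.2.2.1 h

theorem IsTreeRoot.eq_of_isAncestor (ht : IsRootedTree par r) (h₁ : IsTreeRoot par r Vf Ef ρ₁)
    (h₂ : IsTreeRoot par r Vf Ef ρ₂) (h : IsAncestor par ρ₁ ρ₂) : ρ₁ = ρ₂ := by
  by_contra hne
  have hup : IsAncestor par ρ₁ (par ρ₂) := h.par_right_of_ne hne
  have hedge : CleanPath par r Vf Ef (par ρ₂) ρ₂ := (h₁.cleanPath ht h).lower ht hup ⟨1, rfl⟩
  refine h₂.2.2.2 ⟨hedge, Finset.subset_empty.mp ?_⟩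
  exact h₁.2.2.1 ▸ candidates_subset (h₁.cleanPath ht hup)

theorem IsTreeRoot.eq_of_isAncestor_of_isAncestor (ht : IsRootedTree par r)
    (h₁ : IsTreeRoot par r Vf Ef ρ₁) (h₂ : IsTreeRoot par r Vf Ef ρ₂) (hv₁ : IsAncestor par ρ₁ v)
    (hv₂ : IsAncestor par ρ₂ v) : ρ₁ = ρ₂ :=
  (hv₁.total hv₂).elim (h₁.eq_of_isAncestor ht h₂) fun h => (h₂.eq_of_isAncestor ht h₁ h).symm

theorem IsTreeRoot.not_adj {G : SimpleGraph V} (ht : IsRootedTree par r)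
    (hG : ∀ u v, G.Adj u v → IsAncestor par u v ∨ IsAncestor par v u)
    (h₁ : IsTreeRoot par r Vf Ef ρ₁) (h₂ : IsTreeRoot par r Vf Ef ρ₂) (hne : ρ₁ ≠ ρ₂)
    (hu : IsAncestor par ρ₁ u) (hv : IsAncestor par ρ₂ v) : ¬G.Adj u v := fun hadj =>
  hne <| (hG u v hadj).elim (fun huv => h₁.eq_of_isAncestor_of_isAncestor ht h₂ (hu.trans huv) hv)
    fun hvu => h₁.eq_of_isAncestor_of_isAncestor ht h₂ hu (hv.trans hvu)

theorem exists_isTreeRoot_isAncestor (ht : IsRootedTree par r) (hr : v ≠ r) (hf : v ∉ Vf)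
    (hc : candidates par r Vf Ef v = ∅) : ∃ ρ, IsTreeRoot par r Vf Ef ρ ∧ IsAncestor par ρ v := by
  obtain ⟨n, hn⟩ := ht.reaches_root v
  induction n generalizing v with
  | zero => exact absurd hn hr
  | succ n ih =>
    by_cases hv : IsTreeRoot par r Vf Ef v
    · exact ⟨v, hv, IsAncestor.refl par v⟩
    obtain ⟨hedge, hpc⟩ : CleanPath par r Vf Ef (par v) v ∧ candidates par r Vf Ef (par v) = ∅ :=
      not_not.mp fun h => hv ⟨hr, hf, hc, h⟩
    obtain ⟨ρ, hρ, hρv⟩ := ih hedge.top.1 hedge.top.2 hpc hn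
    exact ⟨ρ, hρ, hρv.of_par⟩

theorem not_isAncestor_of_mem_paths [LinearOrder V] [Finite V] (ht : IsRootedTree par r)
    {p : V × V} (hp : p ∈ paths par r Vf Ef) (hv : OnTreePath par p.1 p.2 v)
    (hρ : IsTreeRoot par r Vf Ef ρ₁) : ¬IsAncestor par ρ₁ v := fun hρv => by
  have hd : p.2 ∈ candidates par r Vf Ef v := (mem_fiber_of_mem_paths ht hp hv).1
  simpa [hρ.2.2.1] using candidates_subset (hρ.cleanPath ht hρv) hd

theorem exists_mem_paths_or_treeRoots [LinearOrder V] [Fintype V] (ht : IsRootedTree par r)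
    (hr : v ≠ r) (hf : v ∉ Vf) :
    (∃ p ∈ paths par r Vf Ef, OnTreePath par p.1 p.2 v) ∨
      ∃ ρ ∈ treeRoots par r Vf Ef, IsAncestor par ρ v := by
  by_cases hc : (candidates par r Vf Ef v).Nonempty
  · have hv := mem_fiber_min' hc
    have hd := mem_fiber_self_of_mem ht hv
    exact Or.inl ⟨_, mem_paths.mpr ⟨hd, rfl⟩, (mem_fiber_iff_onTreePath ht hd).mp hv⟩
  · obtain ⟨ρ, hρ, hρv⟩ :=
      exists_isTreeRoot_isAncestor ht hr hf (Finset.not_nonempty_iff_eq_empty.mp hc)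
    exact Or.inr ⟨ρ, mem_treeRoots.mpr hρ, hρv⟩

end TreeRoot

end TreePartition

open TreePartition

theorem disjoint_tree_partitioning_general {V : Type*} [Fintype V]
    (G : SimpleGraph V) (r : V)
    (T : RootedSpanningTree G r) (hT : T.noCrossEdges)
    (Vf : Finset V)
    (Ef : Finset V) :
    ∃ (P : Finset (V × V)) (Ts : Finset V),
      -- each element of `P` is an ancestor-descendant path of `T`
      (∀ p ∈ P, IsAncestor T.par p.1 p.2) ∧
      -- the number of paths is at most the number of failures
      P.card ≤ Vf.card + Ef.card ∧
      -- no path contains a failed vertex, a failed edge, or the root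
      (∀ p ∈ P, ∀ v, OnTreePath T.par p.1 p.2 v →
        v ≠ r ∧ v ∉ Vf ∧ (v ≠ p.1 → v ∉ Ef)) ∧
      -- no subtree contains a failed vertex, a failed edge, or the root
      (∀ ρ ∈ Ts, ∀ v, IsAncestor T.par ρ v →
        v ≠ r ∧ v ∉ Vf ∧ (v ≠ ρ → v ∉ Ef)) ∧
      -- no edge of `G` joins two distinct subtrees of the collection
      (∀ ρ₁ ∈ Ts, ∀ ρ₂ ∈ Ts, ρ₁ ≠ ρ₂ →
        ∀ u v, IsAncestor T.par ρ₁ u → IsAncestor T.par ρ₂ v → ¬ G.Adj u v) ∧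
      -- the parts cover `V \ ({r} ∪ Vf)`
      (∀ v, v ≠ r → v ∉ Vf →
        (∃ p ∈ P, OnTreePath T.par p.1 p.2 v) ∨
        (∃ ρ ∈ Ts, IsAncestor T.par ρ v)) ∧
      -- the parts are pairwise vertex-disjoint
      (∀ p₁ ∈ P, ∀ p₂ ∈ P, p₁ ≠ p₂ →
        ∀ v, OnTreePath T.par p₁.1 p₁.2 v → ¬ OnTreePath T.par p₂.1 p₂.2 v) ∧
      (∀ p ∈ P, ∀ ρ ∈ Ts,
        ∀ v, OnTreePath T.par p.1 p.2 v → ¬ IsAncestor T.par ρ v) ∧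
      (∀ ρ₁ ∈ Ts, ∀ ρ₂ ∈ Ts, ρ₁ ≠ ρ₂ →
        ∀ v, IsAncestor T.par ρ₁ v → ¬ IsAncestor T.par ρ₂ v) := by
  let : LinearOrder V := LinearOrder.lift' _ (Fintype.equivFin V).injective
  have ht := T.isRootedTree
  refine ⟨paths T.par r Vf Ef, treeRoots T.par r Vf Ef,
    fun p hp => (cleanPath_of_mem_paths hp).isAncestor, card_paths_le,
    fun p hp => (cleanPath_of_mem_paths hp).2,
    fun ρ hρ v hv => ((mem_treeRoots.mp hρ).cleanPath ht hv).bottom,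
    fun ρ₁ h₁ ρ₂ h₂ hne u v => (mem_treeRoots.mp h₁).not_adj ht hT (mem_treeRoots.mp h₂) hne,
    fun v hr hf => exists_mem_paths_or_treeRoots ht hr hf,
    fun p hp q hq hne v hvp hvq => hne (eq_of_mem_paths_of_onTreePath ht hp hq hvp hvq),
    fun p hp ρ hρ v hv => not_isAncestor_of_mem_paths ht hp hv (mem_treeRoots.mp hρ),
    fun ρ₁ h₁ ρ₂ h₂ hne v hv₁ hv₂ =>
      hne ((mem_treeRoots.mp h₁).eq_of_isAncestor_of_isAncestor ht (mem_treeRoots.mp h₂) hv₁ hv₂)⟩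

/-- Disjoint tree partitioning. `G` has a DFS tree `T` rooted at a dummy root
`r` adjacent to all other vertices. Given a set `Vf` of failed vertices and a
set `Ef` of failed tree edges (each represented by its child endpoint `c`,
the edge being `(T.par c, c)`), there is a partition of `V \ ({r} ∪ Vf)` into
a collection `P` of ancestor-descendant paths of `T` (given by their endpoint
pairs) and a collection `Ts` of subtrees of `T` (given by their roots) such
that no part contains a failed vertex or failed edge, `|P| ≤ |Vf| + |Ef|`,
and no edge of `G` joins two distinct trees of `Ts`. -/
theorem disjoint_tree_partitioning {V : Type*} [Fintype V] [DecidableEq V]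
    (G : SimpleGraph V) (r : V) (hr : ∀ v, v ≠ r → G.Adj r v)
    (T : RootedSpanningTree G r) (hT : T.noCrossEdges)
    (Vf : Finset V) (hVf : r ∉ Vf)
    (Ef : Finset V) (hEf : ∀ c ∈ Ef, c ≠ r) :
    ∃ (P : Finset (V × V)) (Ts : Finset V),
      -- each element of `P` is an ancestor-descendant path of `T`
      (∀ p ∈ P, IsAncestor T.par p.1 p.2) ∧
      -- the number of paths is at most the number of failures
      P.card ≤ Vf.card + Ef.card ∧
      -- no path contains a failed vertex, a failed edge, or the root
      (∀ p ∈ P, ∀ v, OnTreePath T.par p.1 p.2 v →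
        v ≠ r ∧ v ∉ Vf ∧ (v ≠ p.1 → v ∉ Ef)) ∧
      -- no subtree contains a failed vertex, a failed edge, or the root
      (∀ ρ ∈ Ts, ∀ v, IsAncestor T.par ρ v →
        v ≠ r ∧ v ∉ Vf ∧ (v ≠ ρ → v ∉ Ef)) ∧
      -- no edge of `G` joins two distinct subtrees of the collection
      (∀ ρ₁ ∈ Ts, ∀ ρ₂ ∈ Ts, ρ₁ ≠ ρ₂ →
        ∀ u v, IsAncestor T.par ρ₁ u → IsAncestor T.par ρ₂ v → ¬ G.Adj u v) ∧
      -- the parts cover `V \ ({r} ∪ Vf)`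
      (∀ v, v ≠ r → v ∉ Vf →
        (∃ p ∈ P, OnTreePath T.par p.1 p.2 v) ∨
        (∃ ρ ∈ Ts, IsAncestor T.par ρ v)) ∧
      -- the parts are pairwise vertex-disjoint
      (∀ p₁ ∈ P, ∀ p₂ ∈ P, p₁ ≠ p₂ →
        ∀ v, OnTreePath T.par p₁.1 p₁.2 v → ¬ OnTreePath T.par p₂.1 p₂.2 v) ∧
      (∀ p ∈ P, ∀ ρ ∈ Ts,
        ∀ v, OnTreePath T.par p.1 p.2 v → ¬ IsAncestor T.par ρ v) ∧
      (∀ ρ₁ ∈ Ts, ∀ ρ₂ ∈ Ts, ρ₁ ≠ ρ₂ →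
        ∀ v, IsAncestor T.par ρ₁ v → ¬ IsAncestor T.par ρ₂ v) :=
  disjoint_tree_partitioning_general G r T hT Vf Ef
end

section
/- Refining a disjoint tree partition by a vertex failure: if v lies in a subtree T' of the partition with root ρ, then replacing T' by the path from par(v) up to ρ together with all subtrees hanging from that path (excluding the part containing v's subtree below v, which contains only deleted structure at v) yields a valid partition: each new part is an ancestor-descendant path or subtree of T avoiding v, the number of paths increases by at most one, and no edge joins two distinct subtrees of the new collection. -/
/-- The subtree rooted at `c` hangs from the tree path from `x` down to `y`:
the parent of `c` lies on the path but `c` itself does not. -/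
def HangsFrom {V : Type*} (par : V → V) (x y c : V) : Prop :=
  OnTreePath par x y (par c) ∧ ¬ OnTreePath par x y c


section Aux
variable {V : Type*} {par : V → V}

lemma anc_refl (par : V → V) (u : V) : IsAncestor par u u := ⟨0, rfl⟩

lemma anc_trans {a b c : V} (h1 : IsAncestor par a b) (h2 : IsAncestor par b c) :
    IsAncestor par a c := by
  obtain ⟨n, hn⟩ := h1; obtain ⟨m, hm⟩ := h2
  exact ⟨n + m, by rw [Function.iterate_add_apply, hm, hn]⟩

lemma par_anc (par : V → V) (u : V) : IsAncestor par (par u) u := ⟨1, rfl⟩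

lemma anc_par {c u : V} (h : IsAncestor par c u) (hne : c ≠ u) :
    IsAncestor par c (par u) := by
  obtain ⟨n, hn⟩ := h
  cases n with
  | zero => exact absurd hn.symm hne
  | succ k => exact ⟨k, by rw [← Function.iterate_succ_apply]; exact hn⟩

lemma anc_comparable {a b w : V} (h1 : IsAncestor par a w) (h2 : IsAncestor par b w) :
    IsAncestor par a b ∨ IsAncestor par b a := by
  obtain ⟨n, hn⟩ := h1; obtain ⟨m, hm⟩ := h2
  rcases le_total n m with h | h
  · exact Or.inr ⟨m - n, by rw [← hn, ← Function.iterate_add_apply, ← hm]; congr 1; omega⟩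
  · exact Or.inl ⟨n - m, by rw [← hm, ← Function.iterate_add_apply, ← hn]; congr 1; omega⟩

lemma iterate_root {r : V} (hroot : par r = r) (n : ℕ) : par^[n] r = r := by
  induction n with
  | zero => rfl
  | succ k ih => rw [Function.iterate_succ_apply', ih, hroot]

lemma cycle_eq_root {r : V} (hroot : par r = r) (hreach : ∀ w, ∃ n : ℕ, par^[n] w = r)
    {b : V} {k : ℕ} (hk : 0 < k) (h : par^[k] b = b) : b = r := by
  obtain ⟨N, hN⟩ := hreach b
  have hmul : ∀ j, par^[j * k] b = b := by
    intro j
    induction j with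
    | zero => simp
    | succ i ih => rw [Nat.succ_mul, Function.iterate_add_apply, h, ih]
  have hle : N ≤ N * k := Nat.le_mul_of_pos_right N hk
  have h2 : N * k = (N * k - N) + N := by omega
  calc b = par^[N * k] b := (hmul N).symm
    _ = par^[N * k - N] (par^[N] b) := by rw [← Function.iterate_add_apply, ← h2]
    _ = r := by rw [hN]; exact iterate_root hroot _

/-- A hanging subtree is disjoint from the path. -/
lemma hang_disjoint_path {ρ pv c w : V}
    (hc : HangsFrom par ρ pv c) (hcw : IsAncestor par c w)
    (hw : OnTreePath par ρ pv w) : False := by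
  have hcpv : IsAncestor par c pv := anc_trans hcw hw.2
  have hρc : IsAncestor par ρ c := anc_trans hc.1.1 (par_anc par c)
  exact hc.2 ⟨hρc, hcpv⟩

/-- Two comparable hanging roots coincide. -/
lemma hang_eq_of_anc {ρ pv c₁ c₂ : V}
    (hc₁ : HangsFrom par ρ pv c₁) (hc₂ : HangsFrom par ρ pv c₂)
    (h : IsAncestor par c₁ c₂) : c₁ = c₂ := by
  by_contra hne
  exact hang_disjoint_path hc₁ (anc_par h hne) hc₂.1

end Aux

/-- Refining a disjoint tree partition by a vertex failure: if the failed
vertex `v` lies in a subtree of the partition rooted at `ρ` (and `v ≠ ρ`),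
then replacing that subtree by the ancestor-descendant path from `par v` up to
`ρ` together with all subtrees hanging from this path (other than the one
rooted at `v`, which contains the deleted structure at `v`) yields a valid
partition: the new path and all new subtrees avoid `v`, they are pairwise
vertex-disjoint and cover the subtree of `ρ` minus the subtree of `v`
(so only one path is added), and no edge of `G` joins two distinct subtrees
of the new collection. -/
theorem refine_partition_vertex_failure {V : Type*} (G : SimpleGraph V) (r : V)
    (T : RootedSpanningTree G r) (hT : T.noCrossEdges)
    (ρ v : V) (hv : IsAncestor T.par ρ v) (hvρ : v ≠ ρ) :
    -- the path from `par v` up to `ρ` is an ancestor-descendant path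
    IsAncestor T.par ρ (T.par v) ∧
    -- the new path avoids `v`
    (∀ u, OnTreePath T.par ρ (T.par v) u → u ≠ v) ∧
    -- every hanging subtree other than the one rooted at `v` avoids `v`
    (∀ c, HangsFrom T.par ρ (T.par v) c → c ≠ v →
      ∀ u, IsAncestor T.par c u → u ≠ v) ∧
    -- no edge of `G` joins two distinct hanging subtrees
    (∀ c₁ c₂, HangsFrom T.par ρ (T.par v) c₁ → c₁ ≠ v →
      HangsFrom T.par ρ (T.par v) c₂ → c₂ ≠ v → c₁ ≠ c₂ →
      ∀ u w, IsAncestor T.par c₁ u → IsAncestor T.par c₂ w → ¬ G.Adj u w) ∧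
    -- the new parts are pairwise vertex-disjoint
    (∀ c, HangsFrom T.par ρ (T.par v) c → c ≠ v →
      ∀ u, IsAncestor T.par c u → ¬ OnTreePath T.par ρ (T.par v) u) ∧
    (∀ c₁ c₂, HangsFrom T.par ρ (T.par v) c₁ → c₁ ≠ v →
      HangsFrom T.par ρ (T.par v) c₂ → c₂ ≠ v → c₁ ≠ c₂ →
      ∀ u, IsAncestor T.par c₁ u → ¬ IsAncestor T.par c₂ u) ∧
    -- the new parts cover the subtree of `ρ` minus the subtree of `v`
    (∀ u, IsAncestor T.par ρ u → ¬ IsAncestor T.par v u →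
      OnTreePath T.par ρ (T.par v) u ∨
      ∃ c, HangsFrom T.par ρ (T.par v) c ∧ c ≠ v ∧ IsAncestor T.par c u) := by
  obtain ⟨n, hn⟩ := hv
  have hroot := T.par_root
  have hreach := T.reaches_root
  -- part 1
  have hρpv : IsAncestor T.par ρ (T.par v) := by
    cases n with
    | zero => exact absurd hn hvρ
    | succ k => exact ⟨k, by rw [← Function.iterate_succ_apply]; exact hn⟩
  have hρv : IsAncestor T.par ρ v := ⟨n, hn⟩
  -- part 2
  have part2 : ∀ u, OnTreePath T.par ρ (T.par v) u → u ≠ v := by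
    rintro u hu rfl
    obtain ⟨m, hm⟩ := hu.2
    have hcyc : T.par^[m + 1] u = u := by
      rw [Function.iterate_succ_apply]; exact hm
    have hur : u = r := cycle_eq_root hroot hreach (Nat.succ_pos m) hcyc
    obtain ⟨N, hN⟩ := hρv
    rw [hur, iterate_root hroot] at hN
    exact hvρ (hur.trans hN)
  refine ⟨hρpv, part2, ?_, ?_, ?_, ?_, ?_⟩
  -- part 3
  · rintro c hc hcv u hcu rfl
    exact hang_disjoint_path hc (anc_par hcu hcv) ⟨hρpv, anc_refl _ _⟩
  -- part 4
  · intro c₁ c₂ hc₁ _ hc₂ _ hne u w hu hw hadj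
    rcases hT u w hadj with h | h
    · have h1 : IsAncestor T.par c₁ w := anc_trans hu h
      rcases anc_comparable h1 hw with h' | h'
      · exact hne (hang_eq_of_anc hc₁ hc₂ h')
      · exact hne (hang_eq_of_anc hc₂ hc₁ h').symm
    · have h2 : IsAncestor T.par c₂ u := anc_trans hw h
      rcases anc_comparable hu h2 with h' | h'
      · exact hne (hang_eq_of_anc hc₁ hc₂ h')
      · exact hne (hang_eq_of_anc hc₂ hc₁ h').symm
  -- part 5
  · intro c hc _ u hcu hupath
    exact hang_disjoint_path hc hcu hupath
  -- part 6
  · intro c₁ c₂ hc₁ _ hc₂ _ hne u h1 h2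
    rcases anc_comparable h1 h2 with h' | h'
    · exact hne (hang_eq_of_anc hc₁ hc₂ h')
    · exact hne (hang_eq_of_anc hc₂ hc₁ h').symm
  -- part 7: coverage
  · have key : ∀ m (u : V), T.par^[m] u = ρ → ¬ IsAncestor T.par v u →
        OnTreePath T.par ρ (T.par v) u ∨
        ∃ c, HangsFrom T.par ρ (T.par v) c ∧ c ≠ v ∧ IsAncestor T.par c u := by
      intro m
      induction m with
      | zero =>
        intro u hu _
        have hueq : u = ρ := hu
        subst hueq
        exact Or.inl ⟨anc_refl _ _, hρpv⟩
      | succ k ih =>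
        intro u hu hvu
        by_cases hpath : OnTreePath T.par ρ (T.par v) u
        · exact Or.inl hpath
        · have hu' : T.par^[k] (T.par u) = ρ := by
            rw [← Function.iterate_succ_apply]; exact hu
          have hvu' : ¬ IsAncestor T.par v (T.par u) := by
            rintro ⟨j, hj⟩
            exact hvu ⟨j + 1, by rw [Function.iterate_succ_apply]; exact hj⟩
          rcases ih (T.par u) hu' hvu' with hp | ⟨c, hc, hcv, hcu⟩
          · refine Or.inr ⟨u, ⟨hp, hpath⟩, ?_, anc_refl _ _⟩
            rintro rfl
            exact hvu (anc_refl _ _)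
          · exact Or.inr ⟨c, hc, hcv, anc_trans hcu (par_anc _ u)⟩
    intro u hu hvu
    obtain ⟨m, hm⟩ := hu
    exact key m u hm hvu
end

section
/- Path halving: if from an ancestor-descendant path path(x,y) of length ℓ the DFS traversal enters at a vertex v and traverses toward the farther endpoint, then the remaining untraversed subpath has length at most ℓ/2. Consequently, a single path can be entered (and split) at most O(log n) times over the course of the algorithm before being exhausted. -/
/-- Path halving. Consider an ancestor-descendant path `path(x,y)` with `ℓ`
edges, entered by the DFS traversal at the vertex `v` at distance `i` from
`x` (so at distance `ℓ - i` from `y`). The traversal walks from `v` to the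
farther endpoint, so the remaining untraversed subpath has
`min i (ℓ - i) - 1` edges, which is at most `ℓ / 2`. Consequently, if a path
of initial length at most `n` is repeatedly entered and halved this way
(lengths `f 0, f 1, …`, each entry happening while the path is nonempty and
leaving a piece of at most half the length), the number `s` of entries is
`O(log n)`, namely `s ≤ log₂ n + 1`. -/
theorem path_halving (n ℓ i : ℕ) (hi : i ≤ ℓ) (hn : ℓ ≤ n) :
    min i (ℓ - i) - 1 ≤ ℓ / 2 ∧
    ∀ (f : ℕ → ℕ) (s : ℕ), f 0 ≤ n →
      (∀ j < s, 1 ≤ f j ∧ f (j + 1) ≤ f j / 2) →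
      s ≤ Nat.log 2 n + 1 := by
  constructor
  · rcases le_total i (ℓ - i) with h | h
    · calc min i (ℓ - i) - 1 ≤ i := by omega
        _ ≤ ℓ / 2 := by omega
    · calc min i (ℓ - i) - 1 ≤ ℓ - i := by omega
        _ ≤ ℓ / 2 := by omega
  · intro f s h0 hstep
    by_contra hs
    push_neg at hs
    have key : ∀ j, (∀ k < j, 1 ≤ f k ∧ f (k + 1) ≤ f k / 2) → f j ≤ n / 2 ^ j := by
      intro j
      induction j with
      | zero => exact fun _ => by simpa using h0
      | succ j ih =>
        intro h
        have h1 := h j (by omega)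
        have h2 := ih (fun k hk => h k (by omega))
        calc f (j + 1) ≤ f j / 2 := h1.2
          _ ≤ (n / 2 ^ j) / 2 := Nat.div_le_div_right h2
          _ = n / 2 ^ (j + 1) := by rw [Nat.div_div_eq_div_mul, pow_succ]
    set j := Nat.log 2 n + 1 with hj
    have hjs : j < s := hs
    have h1 : 1 ≤ f j := (hstep j hjs).1
    have h2 : f j ≤ n / 2 ^ j := key j (fun k hk => hstep k (by omega))
    have hn2 : n < 2 ^ j := Nat.lt_pow_succ_log_self (by norm_num) n
    have : n / 2 ^ j = 0 := Nat.div_eq_of_lt hn2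
    omega
end
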